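/- Fix t > 0 and r ∈ (0,1), and for the weighted random recursive tree with root weight t let A_n(r) := E[Σ_{u ∈ T'_n} r^{d(u)}] and B_n(r) := E[Σ_{u,w ∈ T'_n} r^{d(u,w)}]. With the convention A_{−1}(r) := 0, for every n ≥ 0 the closed form B_n(r) = Σ_{k=0}^n [1 + (2rt/(k+t)) A_{k−1}(r)] ∏_{j=k+1}^n (1 + 2r/(j+t)) holds. -/

import Mathlib

open MeasureTheory ProbabilityTheory Filter Topology

instance : MeasurableSpace (Option ℕ) := ⊤

/-- Depth (graph distance to the root `o`) of the vertex `w n` in the recursive tree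
whose parent map is `P` : `P n = none` means the parent of `w n` is the root `o`, and
`P n = some j` (with `j < n`) means the parent of `w n` is `w j`. -/
def wrrtDepth (P : ℕ → Option ℕ) : ℕ → ℕ
  | n =>
    match P n with
    | none => 1
    | some j => if h : j < n then wrrtDepth P j + 1 else 1
termination_by n => n

/-- The parent of a vertex (`none` is the root `o`, `some n` is the vertex `w n`). -/
def wrrtParent (P : ℕ → Option ℕ) : Option ℕ → Option ℕ
  | none => none
  | some n =>
    match P n with
    | none => none
    | some j => if j < n then some j else none

/-- Depth of a vertex of the recursive tree (`none` is the root `o`). -/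
def wrrtDepthV (P : ℕ → Option ℕ) : Option ℕ → ℕ
  | none => 0
  | some n => wrrtDepth P n

def wrrtDistAux (P : ℕ → Option ℕ) : ℕ → Option ℕ → Option ℕ → ℕ
  | 0, _, _ => 0
  | fuel + 1, u, w =>
    if u = w then 0
    else if wrrtDepthV P u < wrrtDepthV P w then wrrtDistAux P fuel u (wrrtParent P w) + 1
    else wrrtDistAux P fuel (wrrtParent P u) w + 1

/-- Graph distance `d(u,w)` between two vertices of the recursive tree with parent
map `P`: repeatedly move the deeper vertex to its parent until the two meet. -/
def wrrtDist (P : ℕ → Option ℕ) (u w : Option ℕ) : ℕ :=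
  wrrtDistAux P (wrrtDepthV P u + wrrtDepthV P w) u w

/-- `A_n(r) = E [ ∑_{u ∈ T'_n} r^{d(u)} ]`, the sum over the non-root vertices
`w_0, …, w_n` of the random recursive tree with (random) parent maps `p · ω`. -/
noncomputable def wrrtA {Ω : Type*} [MeasurableSpace Ω] (μ : Measure Ω) (r : ℝ)
    (p : ℕ → Ω → Option ℕ) (n : ℕ) : ℝ :=
  ∫ ω, (∑ u ∈ Finset.range (n + 1), r ^ wrrtDepth (fun k => p k ω) u) ∂μ

/-- `B_n(r) = E [ ∑_{u,w ∈ T'_n} r^{d(u,w)} ]`, the sum over all ordered pairs of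
non-root vertices of the random recursive tree with (random) parent maps `p · ω`. -/
noncomputable def wrrtB {Ω : Type*} [MeasurableSpace Ω] (μ : Measure Ω) (r : ℝ)
    (p : ℕ → Ω → Option ℕ) (n : ℕ) : ℝ :=
  ∫ ω, (∑ u ∈ Finset.range (n + 1), ∑ w ∈ Finset.range (n + 1),
      r ^ wrrtDist (fun k => p k ω) (some u) (some w)) ∂μ

/-!
Splitting off the pairs that contain the newest vertex gives
`B_{n+1} = B_n + 2 E[S_n(w_{n+1})] + 1`, where `S_n(v) = ∑_{u ∈ T'_n} r^{d(u,v)}`.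
Since `w_{n+1}` is a leaf hanging from its parent `π`, `S_n(w_{n+1}) = r S_n(π)`, and `π` is
independent of `T_n`; conditioning on `π` gives `E[S_n(π)] = (t A_n + B_n) / (n + 1 + t)`, the root
contributing `A_n` and the vertices `w_j` together contributing `B_n`. The closed form is the
solution of this linear recursion by variation of constants.
-/

open Finset

section Tree

variable (P : ℕ → Option ℕ)

lemma wrrtDepth_pos (n : ℕ) : 0 < wrrtDepth P n := by
  rw [wrrtDepth]
  split
  · omega
  · split <;> omega

lemma wrrtDepth_le (n : ℕ) : wrrtDepth P n ≤ n + 1 := by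
  induction n using Nat.strong_induction_on with
  | _ n ih =>
    rw [wrrtDepth]
    split
    · omega
    · split
      · next j _ hj => have := ih j hj; omega
      · omega

lemma wrrtDepthV_eq_zero {v : Option ℕ} : wrrtDepthV P v = 0 ↔ v = none := by
  cases v with
  | none => simp [wrrtDepthV]
  | some n => simpa [wrrtDepthV] using (wrrtDepth_pos P n).ne'

lemma lt_of_mem_wrrtParent_some {n k : ℕ} (h : k ∈ wrrtParent P (some n)) : k < n := by
  simp only [wrrtParent] at h
  split at h
  · simp at h
  · split at h <;> simp_all

lemma forall_mem_wrrtParent_lt {N : ℕ} {v : Option ℕ} (hv : ∀ k ∈ v, k < N) :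
    ∀ k ∈ wrrtParent P v, k < N := by
  rcases v with _ | m
  · simp [wrrtParent]
  · exact fun k hk => (lt_of_mem_wrrtParent_some P hk).trans (hv m rfl)

lemma wrrtParent_some_of_forall_mem_lt {n : ℕ} (h : ∀ k ∈ P n, k < n) :
    wrrtParent P (some n) = P n := by
  simp only [wrrtParent]
  split <;> simp_all

lemma wrrtDepthV_wrrtParent_add_one {v : Option ℕ} (hv : 0 < wrrtDepthV P v) :
    wrrtDepthV P (wrrtParent P v) + 1 = wrrtDepthV P v := by
  cases v with
  | none => simp [wrrtDepthV] at hv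
  | some n =>
    simp only [wrrtParent, wrrtDepthV]
    rw [wrrtDepth]
    rcases P n with _ | j
    · rfl
    · by_cases hj : j < n <;> simp [hj]

lemma eq_of_wrrtDepthV_eq_zero {u w : Option ℕ} (hu : wrrtDepthV P u = 0)
    (hw : wrrtDepthV P w = 0) : u = w := by
  rw [wrrtDepthV_eq_zero] at hu hw
  rw [hu, hw]

lemma wrrtDepthV_pos_of_ne_of_le {u w : Option ℕ} (huw : u ≠ w)
    (h : wrrtDepthV P w ≤ wrrtDepthV P u) : 0 < wrrtDepthV P u := by
  by_contra! h0
  exact huw (eq_of_wrrtDepthV_eq_zero P (by omega) (by omega))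

lemma wrrtDistAux_self (f : ℕ) (u : Option ℕ) : wrrtDistAux P f u u = 0 := by
  cases f <;> simp [wrrtDistAux]

lemma wrrtDistAux_le (f : ℕ) (u w : Option ℕ) : wrrtDistAux P f u w ≤ f := by
  induction f generalizing u w with
  | zero => simp [wrrtDistAux]
  | succ f ih =>
    rw [wrrtDistAux]
    split_ifs
    · omega
    · exact Nat.succ_le_succ (ih _ _)
    · exact Nat.succ_le_succ (ih _ _)

lemma wrrtDistAux_succ {f : ℕ} {u w : Option ℕ}
    (h : wrrtDepthV P u + wrrtDepthV P w ≤ f) :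
    wrrtDistAux P (f + 1) u w = wrrtDistAux P f u w := by
  induction f generalizing u w with
  | zero =>
    obtain rfl : u = w := eq_of_wrrtDepthV_eq_zero P (by omega) (by omega)
    rw [wrrtDistAux_self, wrrtDistAux_self]
  | succ f ih =>
    rw [wrrtDistAux.eq_2 P u w (f + 1), wrrtDistAux.eq_2 P u w f]
    split_ifs with huw hlt
    · rfl
    · have := wrrtDepthV_wrrtParent_add_one P (v := w) (by omega)
      rw [ih (by omega)]
    · have := wrrtDepthV_wrrtParent_add_one P (wrrtDepthV_pos_of_ne_of_le P huw (by omega))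
      rw [ih (by omega)]

lemma wrrtDistAux_eq_wrrtDist {f : ℕ} {u w : Option ℕ}
    (h : wrrtDepthV P u + wrrtDepthV P w ≤ f) : wrrtDistAux P f u w = wrrtDist P u w := by
  induction f, h using Nat.le_induction with
  | base => rfl
  | succ f hf ih => rw [wrrtDistAux_succ P hf, ih]

lemma wrrtDist_self (u : Option ℕ) : wrrtDist P u u = 0 := wrrtDistAux_self P _ u

lemma wrrtDist_le (u w : Option ℕ) : wrrtDist P u w ≤ wrrtDepthV P u + wrrtDepthV P w :=
  wrrtDistAux_le P _ u w

lemma wrrtDist_eq_wrrtParent_right {u w : Option ℕ} (huw : u ≠ w)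
    (h : wrrtDepthV P u < wrrtDepthV P w) :
    wrrtDist P u w = wrrtDist P u (wrrtParent P w) + 1 := by
  have := wrrtDepthV_wrrtParent_add_one P (v := w) (by omega)
  obtain ⟨f, hf⟩ := Nat.exists_eq_add_one_of_ne_zero (n := wrrtDepthV P u + wrrtDepthV P w)
    (by omega)
  rw [wrrtDist, hf, wrrtDistAux, if_neg huw, if_pos h, wrrtDistAux_eq_wrrtDist P (by omega)]

lemma wrrtDist_eq_wrrtParent_left {u w : Option ℕ} (huw : u ≠ w)
    (h : wrrtDepthV P w ≤ wrrtDepthV P u) :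
    wrrtDist P u w = wrrtDist P (wrrtParent P u) w + 1 := by
  have := wrrtDepthV_wrrtParent_add_one P (wrrtDepthV_pos_of_ne_of_le P huw h)
  obtain ⟨f, hf⟩ := Nat.exists_eq_add_one_of_ne_zero (n := wrrtDepthV P u + wrrtDepthV P w)
    (by omega)
  rw [wrrtDist, hf, wrrtDistAux, if_neg huw, if_neg (by omega),
    wrrtDistAux_eq_wrrtDist P (by omega)]

lemma wrrtDist_comm (u w : Option ℕ) : wrrtDist P u w = wrrtDist P w u := by
  obtain ⟨N, hN⟩ : ∃ N, wrrtDepthV P u + wrrtDepthV P w = N := ⟨_, rfl⟩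
  induction N using Nat.strong_induction_on generalizing u w with
  | _ N ih =>
    rcases eq_or_ne u w with rfl | huw
    · rfl
    rcases lt_trichotomy (wrrtDepthV P u) (wrrtDepthV P w) with h | h | h
    · have := wrrtDepthV_wrrtParent_add_one P (v := w) (by omega)
      rw [wrrtDist_eq_wrrtParent_right P huw h, wrrtDist_eq_wrrtParent_left P huw.symm h.le,
        ih _ (by omega) u _ rfl]
    · have := wrrtDepthV_wrrtParent_add_one P (wrrtDepthV_pos_of_ne_of_le P huw h.ge)
      have := wrrtDepthV_wrrtParent_add_one P (wrrtDepthV_pos_of_ne_of_le P huw.symm h.le)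
      have hpu : wrrtParent P u ≠ w := fun he => by rw [← he] at h; omega
      have hpw : wrrtParent P w ≠ u := fun he => by rw [← he] at h; omega
      rw [wrrtDist_eq_wrrtParent_left P huw h.ge, wrrtDist_eq_wrrtParent_left P huw.symm h.le,
        wrrtDist_eq_wrrtParent_right P hpu (by omega),
        wrrtDist_eq_wrrtParent_right P hpw (by omega), ih _ (by omega) _ _ rfl]
    · have := wrrtDepthV_wrrtParent_add_one P (v := u) (by omega)
      rw [wrrtDist_eq_wrrtParent_left P huw h.le, wrrtDist_eq_wrrtParent_right P huw.symm h,
        ih _ (by omega) _ w rfl]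

lemma wrrtDist_none_right (u : Option ℕ) : wrrtDist P u none = wrrtDepthV P u := by
  obtain ⟨N, hN⟩ : ∃ N, wrrtDepthV P u = N := ⟨_, rfl⟩
  induction N generalizing u with
  | zero =>
    rw [(wrrtDepthV_eq_zero P).mp hN, wrrtDist_self]
    rfl
  | succ N ih =>
    have hu : u ≠ none := fun he => by simp [he, wrrtDepthV] at hN
    have := wrrtDepthV_wrrtParent_add_one P (v := u) (by omega)
    rw [wrrtDist_eq_wrrtParent_left P hu (by simp [wrrtDepthV]), ih _ (by omega)]
    omega

lemma wrrtDist_some_of_forall_mem_lt {n : ℕ} {u : Option ℕ} (hu : ∀ k ∈ u, k < n) :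
    wrrtDist P u (some n) = wrrtDist P u (wrrtParent P (some n)) + 1 := by
  obtain ⟨N, hN⟩ : ∃ N, wrrtDepthV P u = N := ⟨_, rfl⟩
  induction N using Nat.strong_induction_on generalizing u with
  | _ N ih =>
    have hun : u ≠ some n := fun he => (hu n (he ▸ rfl)).false
    have hn := wrrtDepthV_wrrtParent_add_one P (v := some n) (wrrtDepth_pos P n)
    by_cases h : wrrtDepthV P u < wrrtDepthV P (some n)
    · exact wrrtDist_eq_wrrtParent_right P hun h
    have := wrrtDepthV_wrrtParent_add_one P (v := u) (by omega)
    rw [wrrtDist_eq_wrrtParent_left P hun (by omega),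
      ih _ (by omega) (forall_mem_wrrtParent_lt P hu) rfl,
      wrrtDist_eq_wrrtParent_left P (u := u) (w := wrrtParent P (some n))
        (fun he => by rw [he] at h; omega) (by omega)]

end Tree

section Locality

variable {N : ℕ}

lemma dependsOn_wrrtDepthV {v : Option ℕ} (hv : ∀ k ∈ v, k < N) :
    DependsOn (fun P => wrrtDepthV P v) (Set.Iio N) := by
  intro P Q H
  rcases v with _ | n
  · rfl
  obtain hn : n < N := hv n rfl
  clear hv
  simp only [wrrtDepthV]
  induction n using Nat.strong_induction_on with
  | _ n ih =>
    rw [wrrtDepth, wrrtDepth, H n hn]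
    rcases Q n with _ | j
    · rfl
    · dsimp only
      split_ifs with hj
      · rw [ih j hj (hj.trans hn)]
      · rfl

lemma dependsOn_wrrtParent {v : Option ℕ} (hv : ∀ k ∈ v, k < N) :
    DependsOn (fun P => wrrtParent P v) (Set.Iio N) := by
  intro P Q H
  rcases v with _ | n
  · rfl
  · simp only [wrrtParent, H n (hv n rfl)]

lemma dependsOn_wrrtDist {u w : Option ℕ} (hu : ∀ k ∈ u, k < N) (hw : ∀ k ∈ w, k < N) :
    DependsOn (fun P => wrrtDist P u w) (Set.Iio N) := by
  intro P Q H
  suffices ∀ f u w, (∀ k ∈ u, k < N) → (∀ k ∈ w, k < N) →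
      wrrtDistAux P f u w = wrrtDistAux Q f u w by
    simp only [wrrtDist, dependsOn_wrrtDepthV hu H, dependsOn_wrrtDepthV hw H, this _ u w hu hw]
  intro f
  induction f with
  | zero => intros; rfl
  | succ f ih =>
    intro u w hu hw
    simp only [wrrtDistAux, dependsOn_wrrtDepthV hu H, dependsOn_wrrtDepthV hw H,
      dependsOn_wrrtParent hu H, dependsOn_wrrtParent hw H,
      ih _ _ hu (forall_mem_wrrtParent_lt Q hw), ih _ _ (forall_mem_wrrtParent_lt Q hu) hw]

end Locality

section DistSum

variable (r : ℝ) (n : ℕ) (P : ℕ → Option ℕ)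

noncomputable def wrrtDistSum (v : Option ℕ) : ℝ :=
  ∑ u ∈ range (n + 1), r ^ wrrtDist P (some u) v

lemma wrrtDistSum_none :
    wrrtDistSum r n P none = ∑ u ∈ range (n + 1), r ^ wrrtDepth P u := by
  simp only [wrrtDistSum, wrrtDist_none_right]
  rfl

lemma sum_wrrtDistSum_some :
    ∑ w ∈ range (n + 1), wrrtDistSum r n P (some w) =
      ∑ u ∈ range (n + 1), ∑ w ∈ range (n + 1), r ^ wrrtDist P (some u) (some w) :=
  sum_comm

lemma wrrtDistSum_some_succ :
    wrrtDistSum r n P (some (n + 1)) = r * wrrtDistSum r n P (wrrtParent P (some (n + 1))) := by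
  rw [wrrtDistSum, wrrtDistSum, mul_sum]
  refine sum_congr rfl fun u hu => ?_
  rw [wrrtDist_some_of_forall_mem_lt P fun k hk => ?_, pow_succ']
  rw [Option.mem_some_iff.mp hk] at hu
  exact Order.lt_add_one_iff.mpr (mem_range_succ_iff.mp hu)

lemma sum_wrrtDistSum_succ :
    ∑ w ∈ range (n + 2), wrrtDistSum r (n + 1) P (some w) =
      ∑ w ∈ range (n + 1), wrrtDistSum r n P (some w)
        + 2 * wrrtDistSum r n P (some (n + 1)) + 1 := by
  have hrow : ∀ v, wrrtDistSum r (n + 1) P v =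
      wrrtDistSum r n P v + r ^ wrrtDist P (some (n + 1)) v := fun v => sum_range_succ _ _
  have hcol : ∑ w ∈ range (n + 1), r ^ wrrtDist P (some (n + 1)) (some w) =
      wrrtDistSum r n P (some (n + 1)) := sum_congr rfl fun w _ => by rw [wrrtDist_comm]
  simp only [hrow, sum_add_distrib]
  rw [sum_range_succ (fun w => wrrtDistSum r n P (some w)),
    sum_range_succ (fun w => r ^ wrrtDist P (some (n + 1)) (some w)), hcol, wrrtDist_self,
    pow_zero]
  ring

lemma abs_wrrtDistSum_le {N : ℕ} (hn : n < N) {v : Option ℕ} (hv : ∀ k ∈ v, k < N) :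
    |wrrtDistSum r n P v| ≤ (n + 1) * max 1 |r| ^ (2 * N) := by
  have hvN : wrrtDepthV P v ≤ N := by
    rcases v with _ | k
    · exact Nat.zero_le _
    · exact (wrrtDepth_le P k).trans (hv k rfl)
  calc |wrrtDistSum r n P v| ≤ ∑ u ∈ range (n + 1), |r ^ wrrtDist P (some u) v| :=
        abs_sum_le_sum_abs _ _
    _ ≤ ∑ _u ∈ range (n + 1), max 1 |r| ^ (2 * N) := sum_le_sum fun u hu => ?_
    _ = (n + 1) * max 1 |r| ^ (2 * N) := by simp
  have hd : wrrtDist P (some u) v ≤ 2 * N := by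
    have := wrrtDist_le P (some u) v
    have := wrrtDepth_le P u
    have := mem_range.mp hu
    simp only [wrrtDepthV] at *
    omega
  rw [abs_pow]
  exact (pow_le_pow_left₀ (abs_nonneg r) (le_max_right 1 |r|) _).trans
    (pow_le_pow_right₀ (le_max_left 1 |r|) hd)

lemma dependsOn_wrrtDistSum {N : ℕ} (hn : n < N) {v : Option ℕ} (hv : ∀ k ∈ v, k < N) :
    DependsOn (fun P => wrrtDistSum r n P v) (Set.Iio N) := fun P Q H =>
  sum_congr rfl fun u hu => by
    refine congrArg (r ^ ·) (dependsOn_wrrtDist (fun k hk => ?_) hv H)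
    obtain rfl := Option.mem_some_iff.mp hk
    exact (mem_range_succ_iff.mp hu).trans_lt hn

end DistSum

section Independence

variable {Ω : Type*} [MeasurableSpace Ω] {μ : Measure Ω}

lemma integral_comp_eq_sum_of_indepFun {α : Type*} [MeasurableSpace α]
    [MeasurableSingletonClass α] {X : Ω → α} (hX : Measurable X) {S : Finset α}
    (hS : ∀ᵐ ω ∂μ, X ω ∈ S) {Z : α → Ω → ℝ} (hZ : ∀ x ∈ S, Integrable (Z x) μ)
    (hXZ : ∀ x ∈ S, IndepFun X (Z x) μ) :
    ∫ ω, Z (X ω) ω ∂μ = ∑ x ∈ S, μ.real (X ⁻¹' {x}) * ∫ ω, Z x ω ∂μ := by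
  have hfiber : ∀ x ∈ S, ∫ ω, (X ⁻¹' {x}).indicator (Z x) ω ∂μ =
      μ.real (X ⁻¹' {x}) * ∫ ω, Z x ω ∂μ := by
    intro x hx
    have hind := (hXZ x hx).comp (φ := ({x} : Set α).indicator (1 : α → ℝ)) (ψ := id)
      (measurable_one.indicator (measurableSet_singleton x)) measurable_id
    have hprod : (X ⁻¹' {x}).indicator (Z x) = (X ⁻¹' {x}).indicator 1 * Z x := by
      ext ω
      by_cases h : X ω = x <;> simp [h]
    rw [hprod, ← integral_indicator_one (hX (measurableSet_singleton x))]
    exact hind.integral_mul_eq_mul_integral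
      ((measurable_one.indicator (measurableSet_singleton x)).comp hX).aestronglyMeasurable
      (hZ x hx).aestronglyMeasurable
  calc ∫ ω, Z (X ω) ω ∂μ = ∫ ω, ∑ x ∈ S, (X ⁻¹' {x}).indicator (Z x) ω ∂μ := by
        refine integral_congr_ae (hS.mono fun ω hω => ?_)
        classical
        simp only [Set.indicator_apply, Set.mem_preimage, Set.mem_singleton_iff, sum_ite_eq,
          if_pos hω]
    _ = ∑ x ∈ S, ∫ ω, (X ⁻¹' {x}).indicator (Z x) ω ∂μ :=
        integral_finsetSum _ fun x hx => (hZ x hx).indicator (hX (measurableSet_singleton x))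
    _ = _ := sum_congr rfl hfiber

variable {ι β : Type*} [MeasurableSpace β] [Countable β] [MeasurableSingletonClass β]
  {p : ι → Ω → β} {s : Finset ι} {F : (ι → β) → ℝ}

lemma DependsOn.measurable_comp (hp : ∀ i, Measurable (p i)) (hF : DependsOn F s) :
    Measurable fun ω => F (p · ω) := by
  obtain ⟨g, rfl⟩ := dependsOn_iff_exists_comp.mp hF
  exact (measurable_of_countable g).comp (measurable_pi_lambda _ fun j => hp j)

lemma ProbabilityTheory.iIndepFun.indepFun_comp_of_dependsOn (hind : iIndepFun p μ)
    (hp : ∀ i, Measurable (p i))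
    {i : ι} (hi : i ∉ s) (hF : DependsOn F s) : IndepFun (p i) (fun ω => F (p · ω)) μ := by
  obtain ⟨g, rfl⟩ := dependsOn_iff_exists_comp.mp hF
  exact (hind.indepFun_finset {i} s (disjoint_singleton_left.mpr hi) hp).comp
    (measurable_pi_apply ⟨i, mem_singleton_self i⟩) (measurable_of_countable g)

end Independence

lemma eq_sum_mul_prod_Ioc_of_eq_mul_add {R : Type*} [CommSemiring R] {a b e : ℕ → R}
    (h0 : b 0 = e 0) (hsucc : ∀ n, b (n + 1) = a (n + 1) * b n + e (n + 1)) (n : ℕ) :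
    b n = ∑ k ∈ range (n + 1), e k * ∏ j ∈ Ioc k n, a j := by
  induction n with
  | zero => simp [h0]
  | succ n ih =>
    rw [hsucc, ih, mul_sum, sum_range_succ _ (n + 1), Ioc_self, prod_empty, mul_one]
    congr 1
    refine sum_congr rfl fun k hk => ?_
    rw [prod_Ioc_succ_top (mem_range_succ_iff.mp hk)]
    ring

section Recursion

variable {Ω : Type*} [MeasurableSpace Ω] {μ : Measure Ω} {t r : ℝ}
  {p : ℕ → Ω → Option ℕ}

lemma ae_mem_insertNone_range [IsProbabilityMeasure μ] (ht : 0 < t) (hpmeas : ∀ n, Measurable (p n))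
    (hroot : ∀ n : ℕ, μ {ω | p n ω = none} = ENNReal.ofReal (t / (n + t)))
    (hparent : ∀ n : ℕ, ∀ j < n, μ {ω | p n ω = some j} = ENNReal.ofReal (1 / (n + t)))
    (m : ℕ) : ∀ᵐ ω ∂μ, p m ω ∈ insertNone (range m) := by
  have hmeas : ∀ s, MeasurableSet (p m ⁻¹' s) := fun _ => hpmeas m trivial
  have hnone : μ (p m ⁻¹' {none}) = ENNReal.ofReal (t / (m + t)) := hroot m
  have hsome : ∀ j ∈ range m, μ (p m ⁻¹' {some j}) = ENNReal.ofReal (1 / (m + t)) :=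
    fun j hj => hparent m j (mem_range.mp hj)
  refine (mem_ae_iff_prob_eq_one (hmeas _)).mpr ?_
  rw [← sum_measure_preimage_singleton _ fun _ _ => hmeas _, sum_insertNone, hnone,
    sum_congr rfl hsome, ← ENNReal.ofReal_sum_of_nonneg fun _ _ => by positivity,
    ← ENNReal.ofReal_add (by positivity) (by positivity), ← ENNReal.ofReal_one]
  congr 1
  simp only [sum_const, card_range, nsmul_eq_mul]
  field_simp
  ring

lemma integrable_wrrtDistSum [IsFiniteMeasure μ] (hpmeas : ∀ n, Measurable (p n)) (r : ℝ)
    {n N : ℕ} (hn : n < N) {v : Option ℕ} (hv : ∀ k ∈ v, k < N) :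
    Integrable (fun ω => wrrtDistSum r n (p · ω) v) μ := by
  have hdep : DependsOn (fun P => wrrtDistSum r n P v) ↑(range N) := by
    rw [coe_range]
    exact dependsOn_wrrtDistSum r n hn hv
  exact .of_bound (hdep.measurable_comp hpmeas).aestronglyMeasurable _
    (ae_of_all _ fun ω => abs_wrrtDistSum_le r n _ hn hv)

lemma wrrtA_eq_integral_wrrtDistSum (n : ℕ) :
    wrrtA μ r p n = ∫ ω, wrrtDistSum r n (p · ω) none ∂μ := by
  simp only [wrrtA, wrrtDistSum_none]

lemma wrrtB_eq_integral_sum_wrrtDistSum (n : ℕ) :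
    wrrtB μ r p n = ∫ ω, ∑ w ∈ range (n + 1), wrrtDistSum r n (p · ω) (some w) ∂μ := by
  simp only [wrrtB, sum_wrrtDistSum_some]

lemma wrrtB_zero [IsProbabilityMeasure μ] : wrrtB μ r p 0 = 1 := by
  simp [wrrtB, wrrtDist_self]

variable [IsProbabilityMeasure μ] (ht : 0 < t) (hpmeas : ∀ n, Measurable (p n))
  (hroot : ∀ n : ℕ, μ {ω | p n ω = none} = ENNReal.ofReal (t / (n + t)))
  (hparent : ∀ n : ℕ, ∀ j < n, μ {ω | p n ω = some j} = ENNReal.ofReal (1 / (n + t)))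
  (hindep : iIndepFun p μ)
include ht hpmeas hroot hparent hindep

lemma integral_wrrtDistSum_some_succ (n : ℕ) :
    ∫ ω, wrrtDistSum r n (p · ω) (some (n + 1)) ∂μ =
      r * (t * wrrtA μ r p n + wrrtB μ r p n) / (n + 1 + t) := by
  have hae := ae_mem_insertNone_range ht hpmeas hroot hparent (n + 1)
  have hbelow : ∀ v ∈ insertNone (range (n + 1)), ∀ k ∈ v, k < n + 1 := by
    intro v hv k hk
    obtain rfl := Option.mem_def.mp hk
    simpa using hv
  have hnone : μ.real (p (n + 1) ⁻¹' {none}) = t / (n + 1 + t) := by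
    rw [measureReal_def, show μ (p (n + 1) ⁻¹' {none}) = _ from hroot (n + 1),
      ENNReal.toReal_ofReal (by positivity), Nat.cast_succ]
  have hsome : ∀ j ∈ range (n + 1), μ.real (p (n + 1) ⁻¹' {some j}) = 1 / (n + 1 + t) := by
    intro j hj
    rw [measureReal_def, show μ (p (n + 1) ⁻¹' {some j}) = _ from
      hparent (n + 1) j (mem_range.mp hj), ENNReal.toReal_ofReal (by positivity), Nat.cast_succ]
  calc ∫ ω, wrrtDistSum r n (p · ω) (some (n + 1)) ∂μ
      = ∫ ω, r * wrrtDistSum r n (p · ω) (p (n + 1) ω) ∂μ :=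
        integral_congr_ae <| hae.mono fun ω hω => by
          dsimp only
          rw [wrrtDistSum_some_succ, wrrtParent_some_of_forall_mem_lt _ (hbelow _ hω)]
    _ = r * ∑ v ∈ insertNone (range (n + 1)),
          μ.real (p (n + 1) ⁻¹' {v}) * ∫ ω, wrrtDistSum r n (p · ω) v ∂μ := by
        rw [integral_const_mul, integral_comp_eq_sum_of_indepFun (hpmeas _) hae
          (Z := fun v ω => wrrtDistSum r n (p · ω) v)
          (fun v hv => integrable_wrrtDistSum hpmeas r n.lt_succ_self (hbelow v hv))]
        intro v hv
        refine hindep.indepFun_comp_of_dependsOn hpmeas (i := n + 1) (s := range (n + 1))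
          (F := fun P => wrrtDistSum r n P v) (by simp) ?_
        rw [coe_range]
        exact dependsOn_wrrtDistSum r n n.lt_succ_self (hbelow v hv)
    _ = _ := by
        rw [sum_insertNone, hnone, sum_congr rfl fun j hj => by rw [hsome j hj], ← mul_sum,
          ← integral_finsetSum _ fun j hj => integrable_wrrtDistSum hpmeas r n.lt_succ_self
            (hbelow _ (by simpa using hj)),
          ← wrrtA_eq_integral_wrrtDistSum, ← wrrtB_eq_integral_sum_wrrtDistSum]
        field_simp

lemma wrrtB_succ (n : ℕ) :
    wrrtB μ r p (n + 1) =
      (1 + 2 * r / (n + 1 + t)) * wrrtB μ r p n + 2 * r * t / (n + 1 + t) * wrrtA μ r p n + 1 := by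
  have hcol : Integrable (fun ω => wrrtDistSum r n (p · ω) (some (n + 1))) μ :=
    integrable_wrrtDistSum hpmeas r (N := n + 2) (by omega) (by simp)
  have hsum : Integrable (fun ω => ∑ w ∈ range (n + 1), wrrtDistSum r n (p · ω) (some w)) μ :=
    integrable_finsetSum _ fun w hw =>
      integrable_wrrtDistSum hpmeas r n.lt_succ_self (by simpa using hw)
  have hsum2 : Integrable (fun ω => ∑ w ∈ range (n + 1), wrrtDistSum r n (p · ω) (some w)
      + 2 * wrrtDistSum r n (p · ω) (some (n + 1))) μ := hsum.add (hcol.const_mul 2)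
  rw [wrrtB_eq_integral_sum_wrrtDistSum]
  simp only [sum_wrrtDistSum_succ]
  rw [integral_add hsum2 (integrable_const 1), integral_add hsum
    (hcol.const_mul 2), integral_const_mul, ← wrrtB_eq_integral_sum_wrrtDistSum,
    integral_wrrtDistSum_some_succ ht hpmeas hroot hparent hindep]
  simp only [integral_const, probReal_univ, smul_eq_mul, mul_one]
  field_simp
  ring

end Recursion

theorem wrrt_B_closed_form_general
    {Ω : Type*} [MeasurableSpace Ω] (μ : Measure Ω) [IsProbabilityMeasure μ]
    (t r : ℝ) (ht : 0 < t)
    -- `p n` is the (random) parent of the vertex `w n` of the weighted random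
    -- recursive tree with root weight `t`:
    (p : ℕ → Ω → Option ℕ) (hpmeas : ∀ n, Measurable (p n))
    (hroot : ∀ n : ℕ, μ {ω | p n ω = none} = ENNReal.ofReal (t / (n + t)))
    (hparent : ∀ n : ℕ, ∀ j < n, μ {ω | p n ω = some j} = ENNReal.ofReal (1 / (n + t)))
    (hindep : iIndepFun (m := fun _ : ℕ => (inferInstance : MeasurableSpace (Option ℕ))) p μ)
    :
    ∀ n : ℕ,
      wrrtB μ r p n =
        ∑ k ∈ Finset.range (n + 1),
          (1 + (2 * r * t / ((k : ℝ) + t)) *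
            (if k = 0 then 0 else wrrtA μ r p (k - 1))) *
          ∏ j ∈ Finset.Ioc k n, (1 + 2 * r / ((j : ℝ) + t)) := by
  refine eq_sum_mul_prod_Ioc_of_eq_mul_add (by simp [wrrtB_zero]) fun n => ?_
  rw [wrrtB_succ ht hpmeas hroot hparent hindep]
  push_cast
  ring

/-- **Equation (3.13).** The closed form for `B_n(r)`: with the convention `A_{-1} = 0`,
`B_n(r) = ∑_{k=0}^n [1 + (2rt/(k+t)) A_{k-1}(r)] ∏_{j=k+1}^n (1 + 2r/(j+t))`. -/
theorem wrrt_B_closed_form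
    {Ω : Type*} [MeasurableSpace Ω] (μ : Measure Ω) [IsProbabilityMeasure μ]
    (t r : ℝ) (ht : 0 < t) (hr : r ∈ Set.Ioo (0 : ℝ) 1)
    -- `p n` is the (random) parent of the vertex `w n` of the weighted random
    -- recursive tree with root weight `t`:
    (p : ℕ → Ω → Option ℕ) (hpmeas : ∀ n, Measurable (p n))
    (hroot : ∀ n : ℕ, μ {ω | p n ω = none} = ENNReal.ofReal (t / (n + t)))
    (hparent : ∀ n : ℕ, ∀ j < n, μ {ω | p n ω = some j} = ENNReal.ofReal (1 / (n + t)))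
    (hindep : iIndepFun (m := fun _ : ℕ => (inferInstance : MeasurableSpace (Option ℕ))) p μ)
    :
    ∀ n : ℕ,
      wrrtB μ r p n =
        ∑ k ∈ Finset.range (n + 1),
          (1 + (2 * r * t / ((k : ℝ) + t)) *
            (if k = 0 then 0 else wrrtA μ r p (k - 1))) *
          ∏ j ∈ Finset.Ioc k n, (1 + 2 * r / ((j : ℝ) + t)) :=
  wrrt_B_closed_form_general μ t r ht p hpmeas hroot hparent hindep
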